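/- Let f : ℝ^d → ℝ be twice continuously differentiable, and suppose its gradient ∇f is L-Lipschitz. Fix a step size α with 0 < α < 1/L and define the gradient descent map φ(x) = x − α∇f(x). Let S be a countable set of critical points of f such that at every p ∈ S the Hessian ∇²f(p) possesses at least one direction v with ⟨∇²f(p)v, v⟩ < 0 (zero eigenvalues are allowed). Then the set of initial points x₀ ∈ ℝ^d for which the iterates φ^n(x₀) converge (as n → ∞) to some point of S has Lebesgue measure zero. -/

import Mathlib

/-!
At a point `p ∈ S` the gradient step `φ = id - α ∇f` has strict derivative
`A = 1 - α ∇²f(p)`, a positive operator (since `α L < 1`) whose top eigenvalue exceeds `1`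
(since the Hessian has a negative direction). Near `p`, `φ` is a small perturbation of `A`, so
for two orbits that stay near `p` forever the difference cannot lie in the cone around the top
eigenspace `U` (that cone is invariant and the `U`-component would grow geometrically). Hence the
set of points whose orbit stays near `p` is a Lipschitz graph over `Uᗮ`, a null set. An orbit
converging to `p` enters that set after finitely many steps, and preimages of null sets under the
antilipschitz map `φ` are null; a countable union over `S` concludes.
-/

open MeasureTheory Filter Topology Metric InnerProductSpace
open scoped RealInnerProductSpace NNReal

section HaarNullSets

variable {E : Type*} [NormedAddCommGroup E] [NormedSpace ℝ E] [FiniteDimensional ℝ E]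
  [MeasurableSpace E] [BorelSpace E] (μ : Measure E) [μ.IsAddHaarMeasure]

lemma addHaar_eq_zero_iff_hausdorffMeasure_eq_zero (s : Set E) :
    μ s = 0 ↔ μH[Module.finrank ℝ E] s = 0 :=
  ⟨fun h => Measure.absolutelyContinuous_isAddHaarMeasure _ _ h,
    fun h => Measure.absolutelyContinuous_isAddHaarMeasure _ _ h⟩

lemma AntilipschitzWith.addHaar_preimage_eq_zero {g : E → E} {K : ℝ≥0}
    (hg : AntilipschitzWith K g) {s : Set E} (hs : μ s = 0) : μ (g ⁻¹' s) = 0 := by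
  rw [addHaar_eq_zero_iff_hausdorffMeasure_eq_zero] at hs ⊢
  refine le_antisymm ?_ zero_le
  simpa [hs] using hg.hausdorffMeasure_preimage_le (d := Module.finrank ℝ E) (Nat.cast_nonneg _) s

lemma AntilipschitzWith.addHaar_preimage_iterate_eq_zero {g : E → E} {K : ℝ≥0}
    (hg : AntilipschitzWith K g) {s : Set E} (hs : μ s = 0) (n : ℕ) :
    μ (g^[n] ⁻¹' s) = 0 := by
  induction n with
  | zero => exact hs
  | succ n ih =>
    rw [Function.iterate_succ, Set.preimage_comp]
    exact hg.addHaar_preimage_eq_zero μ ih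

lemma addHaar_eq_zero_of_antilipschitzWith_restrict {g : E → E} {K : ℝ≥0} {s : Set E}
    (hg : AntilipschitzWith K (s.domRestrict g)) (hs : μ (g '' s) = 0) : μ s = 0 := by
  rw [addHaar_eq_zero_iff_hausdorffMeasure_eq_zero] at hs ⊢
  have himage : μH[(Module.finrank ℝ E : ℝ)] (((↑) : s → E) '' Set.univ) =
      μH[(Module.finrank ℝ E : ℝ)] (Set.univ : Set s) :=
    isometry_subtype_coe.hausdorffMeasure_image (Or.inl (Nat.cast_nonneg _)) _
  rw [Subtype.coe_image_univ] at himage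
  rw [himage]
  refine le_antisymm ?_ zero_le
  have hpre : s.domRestrict g ⁻¹' (g '' s) = Set.univ :=
    Set.eq_univ_of_forall fun x => ⟨x, x.2, rfl⟩
  simpa [hpre, hs] using
    hg.hausdorffMeasure_preimage_le (d := Module.finrank ℝ E) (Nat.cast_nonneg _) (g '' s)

end HaarNullSets

section DominatedSplitting

variable {E : Type*} [NormedAddCommGroup E] [InnerProductSpace ℝ E]

structure IsDominatedSplitting (A : E → E) (U : Submodule ℝ E) [U.HasOrthogonalProjection]
    (θ μ : ℝ) : Prop where
  mul_norm_le : ∀ z, μ * ‖U.starProjection z‖ ≤ ‖U.starProjection (A z)‖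
  norm_orthogonal_le : ∀ z, ‖Uᗮ.starProjection (A z)‖ ≤ θ * ‖Uᗮ.starProjection z‖

variable {A : E → E} {U : Submodule ℝ E} [U.HasOrthogonalProjection] {θ μ : ℝ}

lemma norm_le_norm_starProjection_add (U : Submodule ℝ E) [U.HasOrthogonalProjection] (z : E) :
    ‖z‖ ≤ ‖U.starProjection z‖ + ‖Uᗮ.starProjection z‖ := by
  conv_lhs => rw [← U.starProjection_add_starProjection_orthogonal z]
  exact norm_add_le _ _

lemma norm_starProjection_sub_le (U : Submodule ℝ E) [U.HasOrthogonalProjection] (x y : E) :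
    ‖U.starProjection x - U.starProjection y‖ ≤ ‖x - y‖ := by
  rw [← map_sub]
  exact U.norm_starProjection_apply_le _

lemma IsDominatedSplitting.cone_step (hA : IsDominatedSplitting A U θ μ) (hθ : 0 ≤ θ)
    {ε : ℝ} (hε0 : 0 ≤ ε) (hε : 4 * ε ≤ μ - θ) {z z' : E}
    (hz : ‖Uᗮ.starProjection z‖ ≤ ‖U.starProjection z‖) (hz' : ‖z' - A z‖ ≤ ε * ‖z‖) :
    (μ - 2 * ε) * ‖U.starProjection z‖ ≤ ‖U.starProjection z'‖ ∧
      ‖Uᗮ.starProjection z'‖ ≤ ‖U.starProjection z'‖ := by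
  have hr : ‖z' - A z‖ ≤ 2 * ε * ‖U.starProjection z‖ := by
    have := norm_le_norm_starProjection_add U z
    calc ‖z' - A z‖ ≤ ε * ‖z‖ := hz'
      _ ≤ ε * (2 * ‖U.starProjection z‖) := by gcongr; linarith
      _ = 2 * ε * ‖U.starProjection z‖ := by ring
  have hu := (norm_sub_norm_le _ _).trans (norm_starProjection_sub_le U (A z) z')
  have hc := (norm_sub_norm_le _ _).trans (norm_starProjection_sub_le Uᗮ z' (A z))
  rw [norm_sub_rev (A z)] at hu
  have hcz : θ * ‖Uᗮ.starProjection z‖ ≤ θ * ‖U.starProjection z‖ := by gcongr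
  have hμ := hA.mul_norm_le z
  have hθ' := hA.norm_orthogonal_le z
  constructor <;> nlinarith [norm_nonneg (U.starProjection z)]

/-- Otherwise the differences of the two orbits stay in the invariant cone of `cone_step`, where
their `U`-components grow geometrically, contradicting the boundedness of `s`. -/
theorem IsDominatedSplitting.norm_starProjection_sub_le {φ : E → E} {A : E →L[ℝ] E}
    (hA : IsDominatedSplitting A U θ μ) (hθ : 1 ≤ θ) (hθμ : θ < μ) {ε : ℝ≥0}
    (hε : 4 * (ε : ℝ) ≤ μ - θ) {s : Set E} (hs : Bornology.IsBounded s)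
    (hφ : ApproximatesLinearOn φ A s ε) {x y : E} (hx : ∀ n, φ^[n] x ∈ s)
    (hy : ∀ n, φ^[n] y ∈ s) :
    ‖U.starProjection (x - y)‖ ≤ ‖Uᗮ.starProjection (x - y)‖ := by
  by_contra! hcone
  set z : ℕ → E := fun n => φ^[n] x - φ^[n] y
  set ρ := μ - 2 * ε
  have hρ : 1 < ρ := by linarith
  have hgrowth : ∀ n, ‖Uᗮ.starProjection (z n)‖ ≤ ‖U.starProjection (z n)‖ ∧
      ρ ^ n * ‖U.starProjection (x - y)‖ ≤ ‖U.starProjection (z n)‖ := by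
    intro n
    induction n with
    | zero => simpa [z] using hcone.le
    | succ n ih =>
      have hstep : ‖z (n + 1) - A (z n)‖ ≤ ε * ‖z n‖ := by
        simpa only [z, Function.iterate_succ_apply'] using hφ _ (hx n) _ (hy n)
      obtain ⟨hgrow, hcone'⟩ := hA.cone_step (by linarith) ε.2 hε ih.1 hstep
      refine ⟨hcone', ?_⟩
      calc ρ ^ (n + 1) * ‖U.starProjection (x - y)‖
          = ρ * (ρ ^ n * ‖U.starProjection (x - y)‖) := by ring
        _ ≤ ρ * ‖U.starProjection (z n)‖ := by gcongr; exact ih.2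
        _ ≤ ‖U.starProjection (z (n + 1))‖ := hgrow
  have hbound : ∀ n, ‖U.starProjection (z n)‖ ≤ diam s := fun n =>
    (U.norm_starProjection_apply_le _).trans
      (by rw [← dist_eq_norm]; exact dist_le_diam_of_mem hs (hx n) (hy n))
  have hpos : 0 < ‖U.starProjection (x - y)‖ := (norm_nonneg _).trans_lt hcone
  obtain ⟨n, hn⟩ := (((tendsto_pow_atTop_atTop_of_one_lt hρ).atTop_mul_const hpos
    ).eventually_gt_atTop (diam s)).exists
  linarith [(hgrowth n).2, hbound n]

end DominatedSplitting

/-- Such a set is a Lipschitz graph over the proper subspace `Uᗮ`. -/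
theorem addHaar_eq_zero_of_norm_starProjection_sub_le {E : Type*} [NormedAddCommGroup E]
    [InnerProductSpace ℝ E] [FiniteDimensional ℝ E] [MeasurableSpace E] [BorelSpace E]
    (μ : Measure E) [μ.IsAddHaarMeasure] {U : Submodule ℝ E} (hU : U ≠ ⊥) {s : Set E}
    (hs : ∀ x ∈ s, ∀ y ∈ s, ‖U.starProjection (x - y)‖ ≤ ‖Uᗮ.starProjection (x - y)‖) :
    μ s = 0 := by
  refine addHaar_eq_zero_of_antilipschitzWith_restrict μ (g := Uᗮ.starProjection)
    (K := NNReal.sqrt 2) (AntilipschitzWith.of_le_mul_dist fun x y => ?_) ?_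
  · have hpyth := Submodule.norm_sq_eq_add_norm_sq_starProjection ((x : E) - y) U
    have hcone := hs x x.2 y y.2
    simp only [Set.domRestrict_apply, Subtype.dist_eq, dist_eq_norm, ← map_sub]
    refine (pow_le_pow_iff_left₀ (norm_nonneg _) (by positivity) two_ne_zero).1 ?_
    rw [mul_pow, ← NNReal.coe_pow, NNReal.sq_sqrt, NNReal.coe_ofNat]
    nlinarith [norm_nonneg (U.starProjection ((x : E) - y))]
  · refine measure_mono_null ?_ (Measure.addHaar_submodule μ Uᗮ ?_)
    · rintro _ ⟨x, -, rfl⟩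
      exact Uᗮ.starProjection_apply_mem x
    · rwa [Ne, Submodule.orthogonal_eq_top_iff]

section Spectral

lemma Fintype.exists_le_lt_forall_ne_le {ι : Type*} [Fintype ι] (c : ι → ℝ) {a μ : ℝ}
    (ha : a < μ) (hc : ∀ i, c i ≤ μ) : ∃ θ, a ≤ θ ∧ θ < μ ∧ ∀ i, c i ≠ μ → c i ≤ θ := by
  classical
  set T := insert a ((Finset.univ.filter fun i => c i ≠ μ).image c)
  have hT : T.Nonempty := Finset.insert_nonempty _ _
  refine ⟨T.max' hT, T.le_max' a (Finset.mem_insert_self _ _), (T.max'_lt_iff hT).2 ?_,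
    fun i hi => T.le_max' _ (Finset.mem_insert_of_mem (Finset.mem_image_of_mem c (by simpa)))⟩
  intro y hy
  rcases Finset.mem_insert.1 hy with rfl | hy
  · exact ha
  · obtain ⟨i, hi, rfl⟩ := Finset.mem_image.1 hy
    exact lt_of_le_of_ne (hc i) (Finset.mem_filter.1 hi).2

variable {E : Type*} [NormedAddCommGroup E] [InnerProductSpace ℝ E] [FiniteDimensional ℝ E]
  {A : E →ₗ[ℝ] E}

open Module.End

namespace LinearMap.IsSymmetric

lemma starProjection_eigenspace_apply (hA : A.IsSymmetric) (ν : ℝ) (z : E) :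
    (eigenspace A ν).starProjection (A z) = ν • (eigenspace A ν).starProjection z := by
  set U := eigenspace A ν
  refine U.eq_starProjection_of_mem_of_inner_eq_zero
    (U.smul_mem ν (U.starProjection_apply_mem z)) fun u hu => ?_
  rw [inner_sub_left, hA, mem_eigenspace_iff.1 hu, real_inner_smul_left, real_inner_smul_right,
    U.inner_starProjection_left_eq_right, U.starProjection_eq_self_iff.2 hu, sub_self]

lemma starProjection_orthogonal_eigenspace_apply (hA : A.IsSymmetric) (ν : ℝ) (z : E) :
    (eigenspace A ν)ᗮ.starProjection (A z) = A ((eigenspace A ν)ᗮ.starProjection z) := by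
  have hPz := mem_eigenspace_iff.1 ((eigenspace A ν).starProjection_apply_mem z)
  rw [Submodule.starProjection_orthogonal_val, Submodule.starProjection_orthogonal_val, map_sub,
    hA.starProjection_eigenspace_apply, hPz]

variable {n : ℕ}

lemma inner_eigenvectorBasis_apply (hA : A.IsSymmetric) (hn : Module.finrank ℝ E = n)
    (i : Fin n) (v : E) :
    ⟪hA.eigenvectorBasis hn i, A v⟫ = hA.eigenvalues hn i * ⟪hA.eigenvectorBasis hn i, v⟫ := by
  rw [← hA, hA.apply_eigenvectorBasis, real_inner_smul_left]
  rfl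

lemma norm_apply_sq_eq_sum (hA : A.IsSymmetric) (hn : Module.finrank ℝ E = n) (v : E) :
    ‖A v‖ ^ 2 = ∑ i, (hA.eigenvalues hn i * ⟪hA.eigenvectorBasis hn i, v⟫) ^ 2 := by
  simp_rw [← (hA.eigenvectorBasis hn).sum_sq_inner_right, hA.inner_eigenvectorBasis_apply hn]

lemma inner_apply_self_eq_sum (hA : A.IsSymmetric) (hn : Module.finrank ℝ E = n) (v : E) :
    ⟪A v, v⟫ = ∑ i, hA.eigenvalues hn i * ⟪hA.eigenvectorBasis hn i, v⟫ ^ 2 := by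
  rw [real_inner_comm, ← (hA.eigenvectorBasis hn).sum_inner_mul_inner]
  refine Finset.sum_congr rfl fun i _ => ?_
  rw [hA.inner_eigenvectorBasis_apply hn, real_inner_comm]
  ring

lemma norm_apply_le_of_mem_orthogonal_eigenspace (hA : A.IsSymmetric) {ν θ : ℝ} (hθ : 0 ≤ θ)
    (hle : ∀ ν', HasEigenvalue A ν' → ν' ≠ ν → |ν'| ≤ θ) {w : E}
    (hw : w ∈ (eigenspace A ν)ᗮ) : ‖A w‖ ≤ θ * ‖w‖ := by
  set b := hA.eigenvectorBasis rfl
  set c := hA.eigenvalues rfl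
  refine (pow_le_pow_iff_left₀ (norm_nonneg _) (by positivity) two_ne_zero).1 ?_
  rw [hA.norm_apply_sq_eq_sum rfl, mul_pow, ← b.sum_sq_inner_right, Finset.mul_sum]
  refine Finset.sum_le_sum fun i _ => ?_
  by_cases hi : c i = ν
  · have hbi : b i ∈ eigenspace A ν := mem_eigenspace_iff.2 (hi ▸ hA.apply_eigenvectorBasis rfl i)
    rw [Submodule.inner_right_of_mem_orthogonal hbi hw]
    simp
  · have hev : HasEigenvalue A (c i) := hA.hasEigenvalue_eigenvalues rfl i
    have hci : c i ^ 2 ≤ θ ^ 2 := by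
      simpa only [sq_abs] using pow_le_pow_left₀ (abs_nonneg _) (hle _ hev hi) 2
    rw [mul_pow]
    gcongr

end LinearMap.IsSymmetric

/-- `U` is the eigenspace of the largest eigenvalue `μ > 1`, and `θ < μ` bounds the other
(nonnegative) eigenvalues. -/
theorem LinearMap.IsPositive.exists_isDominatedSplitting (hA : A.IsPositive)
    (hexp : ∃ v, ‖v‖ ^ 2 < ⟪A v, v⟫) :
    ∃ (U : Submodule ℝ E) (θ μ : ℝ), U ≠ ⊥ ∧ 1 ≤ θ ∧ θ < μ ∧ IsDominatedSplitting A U θ μ := by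
  obtain ⟨v, hv⟩ := hexp
  have hsym := hA.isSymmetric
  set b := hsym.eigenvectorBasis rfl
  set c := hsym.eigenvalues rfl
  obtain ⟨i₀, hi₀⟩ : ∃ i, 1 < c i := by
    by_contra! h
    have : ⟪A v, v⟫ ≤ ‖v‖ ^ 2 := by
      rw [hsym.inner_apply_self_eq_sum rfl, ← b.sum_sq_inner_right]
      exact Finset.sum_le_sum fun i _ => mul_le_of_le_one_left (sq_nonneg _) (h i)
    linarith
  have : Nonempty (Fin (Module.finrank ℝ E)) := ⟨i₀⟩
  obtain ⟨j₀, hj₀⟩ := Finite.exists_max c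
  set μ := c j₀
  have hμ : 1 < μ := hi₀.trans_le (hj₀ i₀)
  obtain ⟨θ, hθ, hθμ, hcθ⟩ := Fintype.exists_le_lt_forall_ne_le c hμ hj₀
  have hle : ∀ ν, HasEigenvalue A ν → ν ≠ μ → |ν| ≤ θ := by
    intro ν hν hne
    obtain ⟨i, hi⟩ := hsym.exists_eigenvalues_eq rfl hν
    replace hi : c i = ν := hi
    subst hi
    rw [abs_of_nonneg (hA.nonneg_eigenvalues rfl i)]
    exact hcθ i hne
  refine ⟨eigenspace A μ, θ, μ, hasEigenvalue_iff.1 (hsym.hasEigenvalue_eigenvalues rfl j₀), hθ,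
    hθμ, fun z => ?_, fun z => ?_⟩
  · rw [hsym.starProjection_eigenspace_apply, norm_smul, Real.norm_of_nonneg (by linarith)]
  · rw [hsym.starProjection_orthogonal_eigenspace_apply]
    exact hsym.norm_apply_le_of_mem_orthogonal_eigenspace (by positivity) hle
      (Submodule.starProjection_apply_mem _ _)

end Spectral

/-- Points attracted to `p` eventually stay in a small neighbourhood `s` of `p`; the points
staying in `s` form a null set, and so do its preimages under the antilipschitz map `φ`. -/
theorem addHaar_setOf_tendsto_iterate_eq_zero {E : Type*} [NormedAddCommGroup E]
    [InnerProductSpace ℝ E] [FiniteDimensional ℝ E] [MeasurableSpace E] [BorelSpace E]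
    (μ : Measure E) [μ.IsAddHaarMeasure] {φ : E → E} {K : ℝ≥0} (hφ : AntilipschitzWith K φ)
    {A : E →L[ℝ] E} {p : E} (hA : HasStrictFDerivAt φ A p) (hpos : A.IsPositive)
    (hexp : ∃ v, ‖v‖ ^ 2 < ⟪A v, v⟫) :
    μ {x | Tendsto (fun n => φ^[n] x) atTop (𝓝 p)} = 0 := by
  obtain ⟨U, θ, ν, hU, hθ, hθν, hsplit⟩ := hpos.toLinearMap.exists_isDominatedSplitting hexp
  set ε := Real.toNNReal ((ν - θ) / 4)
  have hε : 4 * (ε : ℝ) ≤ ν - θ := by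
    rw [Real.coe_toNNReal _ (by linarith)]
    linarith
  obtain ⟨t, ht, hφt⟩ := hA.approximates_deriv_on_nhds (c := ε) (Or.inr (by simpa [ε] using hθν))
  set s := t ∩ closedBall p 1
  have hlocal : μ {x | ∀ n, φ^[n] x ∈ s} = 0 :=
    addHaar_eq_zero_of_norm_starProjection_sub_le μ hU fun x hx y hy =>
      hsplit.norm_starProjection_sub_le hθ hθν hε
        (isBounded_closedBall.subset Set.inter_subset_right) (hφt.mono_set Set.inter_subset_left)
        hx hy
  refine measure_mono_null (fun x hx => ?_)
    (measure_iUnion_null fun N => hφ.addHaar_preimage_iterate_eq_zero μ hlocal N)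
  obtain ⟨N, hN⟩ := eventually_atTop.1
    ((hx : Tendsto _ _ _).eventually (inter_mem ht (closedBall_mem_nhds p one_pos)))
  refine Set.mem_iUnion.2 ⟨N, fun n => ?_⟩
  rw [← Function.iterate_add_apply]
  exact hN _ (Nat.le_add_left N n)

lemma LipschitzWith.antilipschitzWith_id_sub {E : Type*} [SeminormedAddCommGroup E] {g : E → E}
    {K : ℝ≥0} (hg : LipschitzWith K g) (hK : K < 1) :
    AntilipschitzWith (1 - K)⁻¹ fun x => x - g x := by
  simpa [sub_eq_add_neg] using AntilipschitzWith.id.add_lipschitzWith hg.neg (by simpa using hK)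

section Gradient

variable {E : Type*} [NormedAddCommGroup E] [InnerProductSpace ℝ E] [CompleteSpace E] {f : E → ℝ}

lemma contDiff_gradient {n : WithTop ℕ∞} (hf : ContDiff ℝ (n + 1) f) :
    ContDiff ℝ n (gradient f) :=
  (toDual ℝ E).symm.toContinuousLinearEquiv.contDiff.comp (hf.fderiv_right le_rfl)

lemma inner_fderiv_gradient_apply (x u v : E) :
    ⟪fderiv ℝ (gradient f) x u, v⟫ = fderiv ℝ (fderiv ℝ f) x u v := by
  have hgrad : gradient f = (toDual ℝ E).symm ∘ fderiv ℝ f := rfl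
  rw [hgrad, LinearIsometryEquiv.comp_fderiv]
  exact toDual_symm_apply

lemma isSymmetric_fderiv_gradient (hf : ContDiff ℝ 2 f) (x : E) :
    (fderiv ℝ (gradient f) x : E →ₗ[ℝ] E).IsSymmetric := fun u v => by
  rw [ContinuousLinearMap.coe_coe, real_inner_comm _ u,
    inner_fderiv_gradient_apply, inner_fderiv_gradient_apply,
    hf.contDiffAt.isSymmSndFDerivAt (by simp) u v]

end Gradient

lemma ContinuousLinearMap.isPositive_id_sub_smul {E : Type*} [NormedAddCommGroup E]
    [InnerProductSpace ℝ E]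
    {T : E →L[ℝ] E} (hT : (T : E →ₗ[ℝ] E).IsSymmetric) {α : ℝ} (hα : 0 ≤ α)
    (hαT : α * ‖T‖ ≤ 1) : (ContinuousLinearMap.id ℝ E - α • T).IsPositive := by
  refine (ContinuousLinearMap.isPositive_iff _).2 ⟨fun u w => ?_, fun v => ?_⟩
  · have := hT u w
    simp only [ContinuousLinearMap.coe_coe] at this
    simp [inner_sub_left, inner_sub_right, real_inner_smul_left, real_inner_smul_right, this]
  · have hTv : ⟪T v, v⟫ ≤ ‖T‖ * ‖v‖ ^ 2 := by
      rw [sq, ← mul_assoc]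
      exact (real_inner_le_norm _ _).trans (by gcongr; exact T.le_opNorm v)
    simp only [sub_apply, ContinuousLinearMap.id_apply,
      smul_apply, inner_sub_left, real_inner_smul_left,
      real_inner_self_eq_norm_sq]
    nlinarith [sq_nonneg ‖v‖]

theorem stmt5_general (d : ℕ) (f : EuclideanSpace ℝ (Fin d) → ℝ) (L : NNReal) (α : ℝ)
    (hf : ContDiff ℝ 2 f)
    (hLip : LipschitzWith L (gradient f))
    (hα : 0 < α) (hα' : α < 1 / (L : ℝ))
    (S : Set (EuclideanSpace ℝ (Fin d)))
    (hS : S.Countable)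
    (hneg : ∀ p ∈ S, ∃ v, (inner ℝ (fderiv ℝ (gradient f) p v) v : ℝ) < 0) :
    volume {x₀ : EuclideanSpace ℝ (Fin d) | ∃ p ∈ S,
      Tendsto (fun k => (fun x => x - α • gradient f x)^[k] x₀) atTop (nhds p)} = 0 := by
  have hL : 0 < (L : ℝ) := by
    by_contra! hL
    simp [le_antisymm hL L.2] at hα'
    linarith
  have hαL : α * L < 1 := by rwa [lt_div_iff₀ hL] at hα'
  have hφ := ((lipschitzWith_smul α).comp hLip).antilipschitzWith_id_sub
    (by rwa [← NNReal.coe_lt_coe, NNReal.coe_mul, coe_nnnorm, Real.norm_of_nonneg hα.le])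
  have hnull : ∀ p ∈ S, volume {x₀ | Tendsto (fun k =>
      (fun x => x - α • gradient f x)^[k] x₀) atTop (𝓝 p)} = 0 := by
    intro p hp
    obtain ⟨v, hv⟩ := hneg p hp
    have hH : α * ‖fderiv ℝ (gradient f) p‖ ≤ 1 :=
      (mul_le_mul_of_nonneg_left (norm_fderiv_le_of_lipschitz ℝ hLip) hα.le).trans hαL.le
    refine addHaar_setOf_tendsto_iterate_eq_zero volume hφ ((hasStrictFDerivAt_id p).sub
      (((contDiff_gradient (n := 1) hf).contDiffAt.hasStrictFDerivAt one_ne_zero).const_smul α))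
      (ContinuousLinearMap.isPositive_id_sub_smul (isSymmetric_fderiv_gradient hf p) hα.le hH)
      ⟨v, ?_⟩
    simp only [sub_apply, ContinuousLinearMap.id_apply,
      smul_apply, inner_sub_left, real_inner_smul_left,
      real_inner_self_eq_norm_sq]
    nlinarith
  exact measure_mono_null (fun x ⟨p, hp, hx⟩ => Set.mem_biUnion hp hx)
    ((measure_biUnion_null_iff hS).2 hnull)

theorem stmt5 (d : ℕ) (f : EuclideanSpace ℝ (Fin d) → ℝ) (L : NNReal) (α : ℝ)
    (hf : ContDiff ℝ 2 f)
    (hLip : LipschitzWith L (gradient f))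
    (hα : 0 < α) (hα' : α < 1 / (L : ℝ))
    (S : Set (EuclideanSpace ℝ (Fin d)))
    (hS : S.Countable)
    (hcrit : ∀ p ∈ S, gradient f p = 0)
    (hneg : ∀ p ∈ S, ∃ v, (inner ℝ (fderiv ℝ (gradient f) p v) v : ℝ) < 0) :
    volume {x₀ : EuclideanSpace ℝ (Fin d) | ∃ p ∈ S,
      Tendsto (fun k => (fun x => x - α • gradient f x)^[k] x₀) atTop (nhds p)} = 0 :=
  stmt5_general d f L α hf hLip hα hα' S hS hneg
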